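/- If G is a finite group with a unique involution, then the power graph of G has a perfect matching. -/

import Mathlib

/-!
Let `t` be the unique involution. Every other non-identity element `x` satisfies `x⁻¹ ≠ x`, and
`x⁻¹` is a power of `x`, so `x — x⁻¹` is an edge; the two self-inverse elements `1` and `t` are
adjacent too. Thus `x ↦ swap 1 t x⁻¹` is a fixed-point-free involution along edges of the power
graph, and its graph is a perfect matching.
-/

open SimpleGraph

def powerGraph (G : Type*) [Group G] : SimpleGraph G where
  Adj x y := x ≠ y ∧ ((∃ n : ℕ, y ^ n = x) ∨ (∃ n : ℕ, x ^ n = y))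
  symm := ⟨fun x y ⟨h, hp⟩ => ⟨h.symm, hp.symm⟩⟩
  loopless := ⟨fun x ⟨h, _⟩ => h rfl⟩

noncomputable def matchingNumber {V : Type*} (Γ : SimpleGraph V) : ℕ :=
  sSup {n | ∃ M : Γ.Subgraph, M.IsMatching ∧ M.edgeSet.ncard = n}

def hasPerfectMatching {V : Type*} (Γ : SimpleGraph V) : Prop :=
  ∃ M : Γ.Subgraph, M.IsPerfectMatching

theorem SimpleGraph.exists_isPerfectMatching_of_involutive {V : Type*} {Γ : SimpleGraph V}
    {f : V → V} (hf : Function.Involutive f) (hadj : ∀ v, Γ.Adj v (f v)) :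
    ∃ M : Γ.Subgraph, M.IsPerfectMatching := by
  let M : Γ.Subgraph :=
    { verts := Set.univ
      Adj := fun v w => f v = w
      adj_sub := by rintro v _ rfl; exact hadj v
      edge_vert := fun _ => trivial
      symm := ⟨fun v w h => by simpa [← h] using hf v⟩ }
  exact ⟨M, M.isPerfectMatching_iff.2 fun v => ⟨f v, rfl, fun _ hw => Eq.symm hw⟩⟩

section PowerGraph

variable {G : Type*} [Group G]

theorem orderOf_eq_two_of_inv_eq_self {x : G} (hx : x⁻¹ = x) (hx1 : x ≠ 1) : orderOf x = 2 :=
  have : Fact (Nat.Prime 2) := ⟨Nat.prime_two⟩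
  orderOf_eq_prime (by rw [sq, ← inv_eq_iff_mul_eq_one, hx]) hx1

theorem powerGraph_adj_one {x : G} (hx : x ≠ 1) : (powerGraph G).Adj 1 x :=
  ⟨hx.symm, Or.inl ⟨0, pow_zero x⟩⟩

theorem IsOfFinOrder.powerGraph_adj_inv {x : G} (hx : IsOfFinOrder x) (hinv : x⁻¹ ≠ x) :
    (powerGraph G).Adj x x⁻¹ :=
  ⟨hinv.symm, Or.inr <| (Submonoid.mem_powers_iff _ _).1 <|
    hx.mem_powers_iff_mem_zpowers.2 (inv_mem (Subgroup.mem_zpowers x))⟩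

variable [DecidableEq G] {t : G}

theorem swap_inv_involutive (htinv : t⁻¹ = t) :
    Function.Involutive fun x : G => Equiv.swap 1 t x⁻¹ := by
  have inv_swap (y : G) : (Equiv.swap 1 t y)⁻¹ = Equiv.swap 1 t y⁻¹ := by
    rcases eq_or_ne y 1 with rfl | hy1
    · simp [htinv]
    rcases eq_or_ne y t with rfl | hyt
    · simp [htinv]
    rw [Equiv.swap_apply_of_ne_of_ne hy1 hyt,
      Equiv.swap_apply_of_ne_of_ne (inv_ne_one.2 hy1) (by rwa [← htinv, Ne, inv_inj])]
  intro x
  simp only [inv_swap, inv_inv, Equiv.swap_apply_self]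

theorem powerGraph_adj_swap_inv [Finite G] (ht1 : t ≠ 1) (htinv : t⁻¹ = t)
    (hinv : ∀ x : G, x⁻¹ = x → x ≠ 1 → x = t) (x : G) :
    (powerGraph G).Adj x (Equiv.swap 1 t x⁻¹) := by
  rcases eq_or_ne x 1 with rfl | hx1
  · simpa using powerGraph_adj_one ht1
  rcases eq_or_ne x t with rfl | hxt
  · simpa [htinv] using (powerGraph_adj_one ht1).symm
  rw [Equiv.swap_apply_of_ne_of_ne (inv_ne_one.2 hx1) (by rwa [← htinv, Ne, inv_inj])]
  exact (isOfFinOrder_of_finite x).powerGraph_adj_inv fun h => hxt (hinv x h hx1)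

end PowerGraph

theorem stmt3 (G : Type*) [Group G] [Fintype G] (h : ∃! t : G, orderOf t = 2) :
    hasPerfectMatching (powerGraph G) := by
  classical
  obtain ⟨t, ht, huniq⟩ := h
  have ht1 : t ≠ 1 := by rintro rfl; simp at ht
  have htinv : t⁻¹ = t := inv_eq_self_of_orderOf_eq_two ht
  exact exists_isPerfectMatching_of_involutive (swap_inv_involutive htinv)
    (powerGraph_adj_swap_inv ht1 htinv fun x hx hx1 =>
      huniq x (orderOf_eq_two_of_inv_eq_self hx hx1))
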